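/- Let d ≥ 1, σ > 0, and let P be a Borel probability measure on ℝ^d that is β-sub-Gaussian for some β > 0, and suppose that X − E[X], for X ~ P, has a Lebesgue density bounded from below by c·e^{−‖x‖²/(2γ)} for some positive constants c, γ. If β < √((σ² + 2γ)/2), then ∫_{ℝ^d} Var_P(φ_σ(x−·)) / (P∗φ_σ(x)) dx < ∞. -/

import Mathlib

open MeasureTheory ProbabilityTheory Real Filter
open scoped ENNReal NNReal RealInnerProductSpace

/-- The isotropic Gaussian density `φ_σ` on `ℝ^d`. -/
noncomputable def gaussDensity (d : ℕ) (σ : ℝ) (x : EuclideanSpace ℝ (Fin d)) : ℝ :=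
  (2 * π * σ ^ 2) ^ (-(d : ℝ) / 2) * Real.exp (-‖x‖ ^ 2 / (2 * σ ^ 2))

/-- A probability measure `P` on `ℝ^d` is `β`-sub-Gaussian if for `X ∼ P`,
`E[exp(α · (X − E[X]))] ≤ e^{β²‖α‖²/2}` for all `α ∈ ℝ^d`. -/
def IsSubGaussian (d : ℕ) (β : ℝ) (P : Measure (EuclideanSpace ℝ (Fin d))) : Prop :=
  ∀ α : EuclideanSpace ℝ (Fin d),
    ∫⁻ y, ENNReal.ofReal (Real.exp ⟪α, y - ∫ z, z ∂P⟫) ∂P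
      ≤ ENNReal.ofReal (Real.exp (β ^ 2 * ‖α‖ ^ 2 / 2))

/-!
Write `m` for the mean of `P` and `u = x - m`. Since `P` shifted by `-m` has density at least
`c e^{-‖z‖²/(2γ)}`, the denominator `P∗φ_σ(x)` dominates a convolution of two Gaussians and is
`≳ e^{-‖u‖²/(2(σ²+γ))}`. The variance is at most `E φ_σ(x - Y)² ∝ E e^{-‖x - Y‖²/σ²}`, and
`‖u‖²/(σ²+τ) ≤ ‖x - y‖²/σ² + ‖y - m‖²/τ` bounds this by `e^{-‖u‖²/(σ²+τ)} E e^{‖Y - m‖²/τ}`.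
Writing `e^{‖z‖²/τ}` as a Gaussian average of `e^{⟪α, z⟫}` (Hubbard–Stratonovich) and using the
sub-Gaussian bound inside, the last expectation is finite for `τ > 2β²`. The ratio is then
integrable as soon as `τ < σ² + 2γ`, and such a `τ` exists because `2β² < σ² + 2γ`.
-/

lemma norm_add_sq_div_add_le {E : Type*} [SeminormedAddCommGroup E] {a b : ℝ} (ha : 0 < a)
    (hb : 0 < b) (u v : E) :
    ‖u + v‖ ^ 2 / (a + b) ≤ ‖u‖ ^ 2 / a + ‖v‖ ^ 2 / b := by
  calc ‖u + v‖ ^ 2 / (a + b) ≤ (‖u‖ + ‖v‖) ^ 2 / (a + b) := by gcongr; exact norm_add_le u v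
    _ ≤ ‖u‖ ^ 2 / a + ‖v‖ ^ 2 / b := by
      rw [div_add_div _ _ ha.ne' hb.ne', div_le_div_iff₀ (by positivity) (by positivity)]
      nlinarith [sq_nonneg (b * ‖u‖ - a * ‖v‖)]

section Gaussian

variable {V : Type*} [NormedAddCommGroup V] [InnerProductSpace ℝ V]

lemma exp_inner_sub_mul_norm_sq {b : ℝ} (hb : 0 < b) (z α : V) :
    rexp (⟪α, z⟫ - b * ‖α‖ ^ 2)
      = rexp (‖z‖ ^ 2 / (4 * b)) * rexp (-b * ‖α - (2 * b)⁻¹ • z‖ ^ 2) := by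
  rw [← exp_add, norm_sub_sq_real, inner_smul_right, norm_smul, mul_pow, Real.norm_eq_abs,
    sq_abs]
  congr 1
  field_simp
  ring

lemma exp_neg_norm_sub_sq_mul_exp_neg_norm_sq {a b : ℝ} (ha : 0 < a) (hb : 0 < b) (u z : V) :
    rexp (-‖u - z‖ ^ 2 / (2 * a)) * rexp (-‖z‖ ^ 2 / (2 * b))
      = rexp (-‖u‖ ^ 2 / (2 * (a + b)))
        * rexp (-((a + b) / (2 * a * b)) * ‖z - (b / (a + b)) • u‖ ^ 2) := by
  rw [← exp_add, ← exp_add, norm_sub_sq_real, norm_sub_sq_real, inner_smul_right, norm_smul,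
    mul_pow, Real.norm_eq_abs, sq_abs, real_inner_comm]
  congr 1
  field_simp
  ring

variable [FiniteDimensional ℝ V] [MeasurableSpace V] [BorelSpace V]

lemma integral_exp_neg_mul_norm_sub_sq {b : ℝ} (hb : 0 < b) (w : V) :
    ∫ v, rexp (-b * ‖v - w‖ ^ 2) = (π / b) ^ (Module.finrank ℝ V / 2 : ℝ) := by
  rw [integral_sub_right_eq_self (fun v ↦ rexp (-b * ‖v‖ ^ 2)) w,
    GaussianFourier.integral_rexp_neg_mul_sq_norm hb]

lemma integrable_exp_neg_mul_norm_sub_sq {b : ℝ} (hb : 0 < b) (w : V) :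
    Integrable fun v ↦ rexp (-b * ‖v - w‖ ^ 2) := by
  refine .of_integral_ne_zero ?_
  rw [integral_exp_neg_mul_norm_sub_sq hb]
  exact (rpow_pos_of_pos (by positivity) _).ne'

lemma integral_exp_inner_sub_mul_norm_sq {b : ℝ} (hb : 0 < b) (z : V) :
    ∫ α, rexp (⟪α, z⟫ - b * ‖α‖ ^ 2)
      = rexp (‖z‖ ^ 2 / (4 * b)) * (π / b) ^ (Module.finrank ℝ V / 2 : ℝ) := by
  simp_rw [exp_inner_sub_mul_norm_sq hb z]
  rw [integral_const_mul, integral_exp_neg_mul_norm_sub_sq hb]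

lemma integrable_exp_inner_sub_mul_norm_sq {b : ℝ} (hb : 0 < b) (z : V) :
    Integrable fun α ↦ rexp (⟪α, z⟫ - b * ‖α‖ ^ 2) := by
  simp_rw [exp_inner_sub_mul_norm_sq hb z]
  exact (integrable_exp_neg_mul_norm_sub_sq hb _).const_mul _

lemma integrable_exp_norm_sub_sq_div_of_subGaussian {P : Measure V} [SFinite P] {β τ : ℝ} {m : V}
    (hsub : ∀ α, ∫⁻ y, ENNReal.ofReal (rexp ⟪α, y - m⟫) ∂P
      ≤ ENNReal.ofReal (rexp (β ^ 2 * ‖α‖ ^ 2 / 2)))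
    (hτ : 2 * β ^ 2 < τ) :
    Integrable (fun y ↦ rexp (‖y - m‖ ^ 2 / τ)) P := by
  obtain ⟨b, rfl⟩ : ∃ b, τ = 4 * b := ⟨τ / 4, by ring⟩
  have hbβ : 0 < b - β ^ 2 / 2 := by linarith
  have hb : 0 < b := by linarith [sq_nonneg β]
  set K := (π / b) ^ (Module.finrank ℝ V / 2 : ℝ)
  have hK : 0 < K := rpow_pos_of_pos (by positivity) _
  have hHS (z : V) : ENNReal.ofReal K * ENNReal.ofReal (rexp (‖z‖ ^ 2 / (4 * b)))
      = ∫⁻ α, ENNReal.ofReal (rexp (⟪α, z⟫ - b * ‖α‖ ^ 2)) := by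
    rw [← ofReal_integral_eq_lintegral_ofReal (integrable_exp_inner_sub_mul_norm_sq hb z)
      (.of_forall fun _ ↦ (exp_pos _).le), integral_exp_inner_sub_mul_norm_sq hb z,
      ← ENNReal.ofReal_mul hK.le, mul_comm]
  have hmgf (α : V) : ∫⁻ y, ENNReal.ofReal (rexp (⟪α, y - m⟫ - b * ‖α‖ ^ 2)) ∂P
      ≤ ENNReal.ofReal (rexp (-(b - β ^ 2 / 2) * ‖α‖ ^ 2)) :=
    calc ∫⁻ y, ENNReal.ofReal (rexp (⟪α, y - m⟫ - b * ‖α‖ ^ 2)) ∂P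
        = (∫⁻ y, ENNReal.ofReal (rexp ⟪α, y - m⟫) ∂P) * ENNReal.ofReal (rexp (-b * ‖α‖ ^ 2)) := by
          simp_rw [← lintegral_mul_const' _ _ ENNReal.ofReal_ne_top,
            ← ENNReal.ofReal_mul (exp_pos _).le, ← exp_add, sub_eq_add_neg, neg_mul]
      _ ≤ ENNReal.ofReal (rexp (β ^ 2 * ‖α‖ ^ 2 / 2)) * ENNReal.ofReal (rexp (-b * ‖α‖ ^ 2)) := by
          gcongr
          exact hsub α
      _ = ENNReal.ofReal (rexp (-(b - β ^ 2 / 2) * ‖α‖ ^ 2)) := by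
          rw [← ENNReal.ofReal_mul (exp_pos _).le, ← exp_add]
          ring_nf
  have hfin : ENNReal.ofReal K * ∫⁻ y, ENNReal.ofReal (rexp (‖y - m‖ ^ 2 / (4 * b))) ∂P < ⊤ :=
    calc ENNReal.ofReal K * ∫⁻ y, ENNReal.ofReal (rexp (‖y - m‖ ^ 2 / (4 * b))) ∂P
        = ∫⁻ y, (∫⁻ α, ENNReal.ofReal (rexp (⟪α, y - m⟫ - b * ‖α‖ ^ 2))) ∂P := by
          simp_rw [← lintegral_const_mul' _ _ ENNReal.ofReal_ne_top, hHS]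
      _ = ∫⁻ α, ∫⁻ y, ENNReal.ofReal (rexp (⟪α, y - m⟫ - b * ‖α‖ ^ 2)) ∂P :=
          lintegral_lintegral_swap <| Measurable.aemeasurable <|
            Measurable.ennreal_ofReal <| Continuous.measurable <| by fun_prop
      _ ≤ ∫⁻ α, ENNReal.ofReal (rexp (-(b - β ^ 2 / 2) * ‖α‖ ^ 2)) := lintegral_mono hmgf
      _ < ⊤ := by simpa using (integrable_exp_neg_mul_norm_sub_sq hbβ (0 : V)).lintegral_lt_top
  refine (lintegral_ofReal_ne_top_iff_integrable (by fun_prop)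
    (.of_forall fun _ ↦ (exp_pos _).le)).1 ?_
  exact (ENNReal.lt_top_of_mul_ne_top_right hfin.ne (ENNReal.ofReal_pos.2 hK).ne').ne

lemma integral_exp_neg_norm_sub_sq_mul_exp_neg_norm_sq {a b : ℝ} (ha : 0 < a) (hb : 0 < b)
    (u : V) :
    ∫ z, rexp (-‖u - z‖ ^ 2 / (2 * a)) * rexp (-‖z‖ ^ 2 / (2 * b))
      = rexp (-‖u‖ ^ 2 / (2 * (a + b)))
        * (2 * π * a * b / (a + b)) ^ (Module.finrank ℝ V / 2 : ℝ) := by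
  simp_rw [exp_neg_norm_sub_sq_mul_exp_neg_norm_sq ha hb u]
  rw [integral_const_mul, integral_exp_neg_mul_norm_sub_sq (by positivity)]
  congr 2
  field_simp

lemma integrable_exp_neg_norm_sub_sq_mul_exp_neg_norm_sq {a b : ℝ} (ha : 0 < a) (hb : 0 < b)
    (u : V) :
    Integrable fun z ↦ rexp (-‖u - z‖ ^ 2 / (2 * a)) * rexp (-‖z‖ ^ 2 / (2 * b)) := by
  simp_rw [exp_neg_norm_sub_sq_mul_exp_neg_norm_sq ha hb u]
  exact (integrable_exp_neg_mul_norm_sub_sq (by positivity) _).const_mul _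

end Gaussian

section gaussDensity

variable {d : ℕ}

local notation "E" => EuclideanSpace ℝ (Fin d)

lemma gaussDensity_nonneg (σ : ℝ) (x : E) : 0 ≤ gaussDensity d σ x := by
  unfold gaussDensity; positivity

lemma gaussDensity_le (σ : ℝ) (x : E) : gaussDensity d σ x ≤ (2 * π * σ ^ 2) ^ (-(d : ℝ) / 2) := by
  refine mul_le_of_le_one_right (by positivity) (exp_le_one_iff.2 ?_)
  exact div_nonpos_of_nonpos_of_nonneg (neg_nonpos.2 (by positivity)) (by positivity)

@[fun_prop]
lemma continuous_gaussDensity (σ : ℝ) : Continuous (gaussDensity d σ) := by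
  unfold gaussDensity; fun_prop

lemma gaussDensity_sq (σ : ℝ) (x : E) :
    gaussDensity d σ x ^ 2 = ((2 * π * σ ^ 2) ^ (-(d : ℝ) / 2)) ^ 2 * rexp (-‖x‖ ^ 2 / σ ^ 2) := by
  rw [gaussDensity, mul_pow, ← exp_nat_mul]
  congr 2
  push_cast
  field_simp

lemma integrable_gaussDensity_sub {P : Measure E} [IsFiniteMeasure P] (σ : ℝ) (x : E) :
    Integrable (fun y ↦ gaussDensity d σ (x - y)) P := by
  refine .of_bound (by fun_prop) ((2 * π * σ ^ 2) ^ (-(d : ℝ) / 2)) (.of_forall fun y ↦ ?_)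
  rw [Real.norm_of_nonneg (gaussDensity_nonneg σ _)]
  exact gaussDensity_le σ _

lemma le_integral_gaussDensity_sub {σ c γ : ℝ} (hσ : σ ≠ 0) (hc : 0 < c) (hγ : 0 < γ)
    {P : Measure E} [IsFiniteMeasure P] {m : E} {p : E → ℝ} (hp : Measurable p)
    (hPd : P.map (fun y ↦ y - m) = volume.withDensity fun z ↦ ENNReal.ofReal (p z))
    (hlow : ∀ z, c * rexp (-‖z‖ ^ 2 / (2 * γ)) ≤ p z) (x : E) :
    c * (2 * π * σ ^ 2) ^ (-(d : ℝ) / 2) * (2 * π * σ ^ 2 * γ / (σ ^ 2 + γ)) ^ ((d : ℝ) / 2)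
        * rexp (-‖x - m‖ ^ 2 / (2 * (σ ^ 2 + γ)))
      ≤ ∫ y, gaussDensity d σ (x - y) ∂P := by
  have hσ2 : 0 < σ ^ 2 := by positivity
  set C := c * (2 * π * σ ^ 2) ^ (-(d : ℝ) / 2)
  have hconv : (fun z ↦ c * rexp (-‖z‖ ^ 2 / (2 * γ)) * gaussDensity d σ (x - m - z))
      = fun z ↦ C * (rexp (-‖x - m - z‖ ^ 2 / (2 * σ ^ 2)) * rexp (-‖z‖ ^ 2 / (2 * γ))) := by
    ext z; rw [gaussDensity]; ring
  rw [← ENNReal.ofReal_le_ofReal_iff (integral_nonneg fun _ ↦ gaussDensity_nonneg σ _),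
    ofReal_integral_eq_lintegral_ofReal (integrable_gaussDensity_sub σ x)
      (.of_forall fun _ ↦ gaussDensity_nonneg σ _)]
  calc ENNReal.ofReal (C * (2 * π * σ ^ 2 * γ / (σ ^ 2 + γ)) ^ ((d : ℝ) / 2)
        * rexp (-‖x - m‖ ^ 2 / (2 * (σ ^ 2 + γ))))
      = ∫⁻ z, ENNReal.ofReal (c * rexp (-‖z‖ ^ 2 / (2 * γ)) * gaussDensity d σ (x - m - z)) := by
        rw [← ofReal_integral_eq_lintegral_ofReal, hconv, integral_const_mul,
          integral_exp_neg_norm_sub_sq_mul_exp_neg_norm_sq hσ2 hγ, finrank_euclideanSpace_fin]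
        · ring_nf
        · rw [hconv]
          exact (integrable_exp_neg_norm_sub_sq_mul_exp_neg_norm_sq hσ2 hγ _).const_mul _
        · exact .of_forall fun _ ↦ mul_nonneg (by positivity) (gaussDensity_nonneg σ _)
    _ ≤ ∫⁻ z, ENNReal.ofReal (p z) * ENNReal.ofReal (gaussDensity d σ (x - m - z)) := by
        gcongr with z
        rw [ENNReal.ofReal_mul (by positivity)]
        gcongr
        exact hlow z
    _ = ∫⁻ z, ENNReal.ofReal (gaussDensity d σ (x - m - z)) ∂(P.map (fun y ↦ y - m)) := by
        rw [hPd, lintegral_withDensity_eq_lintegral_mul _ hp.ennreal_ofReal (by fun_prop)]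
        rfl
    _ = ∫⁻ y, ENNReal.ofReal (gaussDensity d σ (x - y)) ∂P := by
        rw [lintegral_map (by fun_prop) (by fun_prop)]
        simp_rw [sub_sub_sub_cancel_right]

lemma integral_gaussDensity_sub_sq_le {σ τ : ℝ} (hσ : σ ≠ 0) (hτ : 0 < τ) {P : Measure E}
    {m : E} (hint : Integrable (fun y ↦ rexp (‖y - m‖ ^ 2 / τ)) P) (x : E) :
    ∫ y, gaussDensity d σ (x - y) ^ 2 ∂P
      ≤ ((2 * π * σ ^ 2) ^ (-(d : ℝ) / 2)) ^ 2 * rexp (-‖x - m‖ ^ 2 / (σ ^ 2 + τ))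
        * ∫ y, rexp (‖y - m‖ ^ 2 / τ) ∂P := by
  rw [← integral_const_mul]
  refine integral_mono_of_nonneg (.of_forall fun _ ↦ sq_nonneg _) (hint.const_mul _)
    (.of_forall fun y ↦ ?_)
  have hsplit := norm_add_sq_div_add_le (by positivity : 0 < σ ^ 2) hτ (x - y) (y - m)
  rw [sub_add_sub_cancel] at hsplit
  dsimp only
  rw [gaussDensity_sq, mul_assoc _ (rexp _), ← exp_add]
  gcongr
  rw [neg_div, neg_div]
  linarith

lemma exists_variance_div_integral_gaussDensity_sub_le {σ c γ τ : ℝ} (hσ : σ ≠ 0)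
    (hc : 0 < c) (hγ : 0 < γ) (hτ : 0 < τ) {P : Measure E}
    [IsProbabilityMeasure P] {m : E} {p : E → ℝ} (hp : Measurable p)
    (hPd : P.map (fun y ↦ y - m) = volume.withDensity fun z ↦ ENNReal.ofReal (p z))
    (hlow : ∀ z, c * rexp (-‖z‖ ^ 2 / (2 * γ)) ≤ p z)
    (hint : Integrable (fun y ↦ rexp (‖y - m‖ ^ 2 / τ)) P) :
    ∃ A, ∀ x, variance (fun y ↦ gaussDensity d σ (x - y)) P / ∫ y, gaussDensity d σ (x - y) ∂P
      ≤ A * rexp (-(1 / (σ ^ 2 + τ) - 1 / (2 * (σ ^ 2 + γ))) * ‖x - m‖ ^ 2) := by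
  set K := (2 * π * σ ^ 2) ^ (-(d : ℝ) / 2)
  set C := c * K * (2 * π * σ ^ 2 * γ / (σ ^ 2 + γ)) ^ ((d : ℝ) / 2)
  set M := ∫ y, rexp (‖y - m‖ ^ 2 / τ) ∂P
  have hC : 0 < C := by positivity
  refine ⟨K ^ 2 * M / C, fun x ↦ ?_⟩
  have hnum := (variance_le_expectation_sq (by fun_prop)).trans
    (integral_gaussDensity_sub_sq_le hσ hτ hint x)
  have hden := le_integral_gaussDensity_sub hσ hc hγ hp hPd hlow x
  calc variance (fun y ↦ gaussDensity d σ (x - y)) P / ∫ y, gaussDensity d σ (x - y) ∂P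
      ≤ K ^ 2 * rexp (-‖x - m‖ ^ 2 / (σ ^ 2 + τ)) * M
        / (C * rexp (-‖x - m‖ ^ 2 / (2 * (σ ^ 2 + γ)))) :=
        div_le_div₀ (by positivity) hnum (by positivity) hden
    _ = K ^ 2 * M / C
        * (rexp (-‖x - m‖ ^ 2 / (σ ^ 2 + τ)) / rexp (-‖x - m‖ ^ 2 / (2 * (σ ^ 2 + γ)))) := by
        ring
    _ = K ^ 2 * M / C * rexp (-(1 / (σ ^ 2 + τ) - 1 / (2 * (σ ^ 2 + γ))) * ‖x - m‖ ^ 2) := by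
        rw [← exp_sub]
        ring_nf

end gaussDensity

theorem chiSq_condition_of_density_lower_bound_general
    (d : ℕ) (σ : ℝ) (hσ : 0 < σ) (β : ℝ) (hβ : 0 < β)
    (c γ : ℝ) (hc : 0 < c) (hγ : 0 < γ)
    (P : Measure (EuclideanSpace ℝ (Fin d))) [IsProbabilityMeasure P]
    (hsub : IsSubGaussian d β P)
    (p : EuclideanSpace ℝ (Fin d) → ℝ) (hp : Measurable p)
    (hPd : P.map (fun y => y - ∫ z, z ∂P) = volume.withDensity fun x => ENNReal.ofReal (p x))
    (hlow : ∀ x, c * Real.exp (-‖x‖ ^ 2 / (2 * γ)) ≤ p x)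
    (hβb : β < Real.sqrt ((σ ^ 2 + 2 * γ) / 2)) :
    ∫⁻ x, ENNReal.ofReal
        (variance (fun y => gaussDensity d σ (x - y)) P / ∫ y, gaussDensity d σ (x - y) ∂P)
      < ⊤ := by
  have hβ2 : 2 * β ^ 2 < σ ^ 2 + 2 * γ := by linarith [(lt_sqrt hβ.le).1 hβb]
  obtain ⟨τ, hβτ, hτγ⟩ := exists_between hβ2
  have hτ : 0 < τ := by linarith [sq_nonneg β]
  obtain ⟨A, hA⟩ := exists_variance_div_integral_gaussDensity_sub_le hσ.ne' hc hγ hτ hp hPd hlow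
    (integrable_exp_norm_sub_sq_div_of_subGaussian hsub hβτ)
  have hκ : 0 < 1 / (σ ^ 2 + τ) - 1 / (2 * (σ ^ 2 + γ)) := by
    rw [sub_pos]; gcongr; linarith
  calc _ ≤ ∫⁻ x, ENNReal.ofReal (A * rexp (-(1 / (σ ^ 2 + τ) - 1 / (2 * (σ ^ 2 + γ)))
          * ‖x - ∫ z, z ∂P‖ ^ 2)) := lintegral_mono fun x ↦ ENNReal.ofReal_le_ofReal (hA x)
    _ < ⊤ := ((integrable_exp_neg_mul_norm_sub_sq hκ _).const_mul A).lintegral_lt_top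

/-- **χ² integrability condition under a Gaussian density lower bound:** if `P` is
`β`-sub-Gaussian and the centered measure has a Lebesgue density bounded below by
`c e^{−‖x‖²/(2γ)}`, and `β < √((σ²+2γ)/2)`, then `∫ Var_P(φ_σ(x−·))/(P∗φ_σ(x)) dx < ∞`. -/
theorem chiSq_condition_of_density_lower_bound
    (d : ℕ) (hd : 1 ≤ d) (σ : ℝ) (hσ : 0 < σ) (β : ℝ) (hβ : 0 < β)
    (c γ : ℝ) (hc : 0 < c) (hγ : 0 < γ)
    (P : Measure (EuclideanSpace ℝ (Fin d))) [IsProbabilityMeasure P]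
    (hsub : IsSubGaussian d β P)
    (p : EuclideanSpace ℝ (Fin d) → ℝ) (hp : Measurable p)
    (hPd : P.map (fun y => y - ∫ z, z ∂P) = volume.withDensity fun x => ENNReal.ofReal (p x))
    (hlow : ∀ x, c * Real.exp (-‖x‖ ^ 2 / (2 * γ)) ≤ p x)
    (hβb : β < Real.sqrt ((σ ^ 2 + 2 * γ) / 2)) :
    ∫⁻ x, ENNReal.ofReal
        (variance (fun y => gaussDensity d σ (x - y)) P / ∫ y, gaussDensity d σ (x - y) ∂P)
      < ⊤ :=
  chiSq_condition_of_density_lower_bound_general d σ hσ β hβ c γ hc hγ P hsub p hp hPd hlow hβb
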